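/- Let c, c₀ be real numbers and define F(x) := 2√2·c·x·(ln x − 1) + 2·x·ln x·(ln x − 2) + 4·x + c²·x + c₀ for x > 0. Then F″(x) = 2√2·c/x + 4·(ln x)/x and (x²/8)·(F″(x))² = F′(x) for all x > 0. -/

import Mathlib

/-!
Both derivatives are computed on the open half-line `(0, ∞)`, where `F` agrees with an explicit
function, so `F' = 2√2 c log x + 2 (log x)² + c²` and `F'' = (2√2 c + 4 log x) / x`. Then
`x² F''² / 8 = (2√2 c + 4 log x)² / 8`, which expands to `F'` because `(2√2)² = 8`.
-/

open Real Set

noncomputable section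

namespace Homing

def value (c c₀ x : ℝ) : ℝ :=
  2 * √2 * c * x * (log x - 1) + 2 * x * log x * (log x - 2) + 4 * x + c ^ 2 * x + c₀

def valueDeriv (c x : ℝ) : ℝ :=
  2 * √2 * c * log x + 2 * log x ^ 2 + c ^ 2

def valueDeriv2 (c x : ℝ) : ℝ :=
  2 * √2 * c / x + 4 * log x / x

theorem hasDerivAt_value (c c₀ : ℝ) {x : ℝ} (hx : 0 < x) :
    HasDerivAt (value c c₀) (valueDeriv c x) x := by
  have hlog := hasDerivAt_log hx.ne'
  have hid := hasDerivAt_id x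
  have h := (((((hid.const_mul (2 * √2 * c)).mul (hlog.sub_const 1)).add
    (((hid.const_mul 2).mul hlog).mul (hlog.sub_const 2))).add (hid.const_mul 4)).add
    (hid.const_mul (c ^ 2))).add_const c₀
  refine h.congr_deriv ?_
  simp only [valueDeriv, id, Pi.mul_apply]
  field_simp
  ring

theorem hasDerivAt_valueDeriv (c : ℝ) {x : ℝ} (hx : 0 < x) :
    HasDerivAt (valueDeriv c) (valueDeriv2 c x) x := by
  have hlog := hasDerivAt_log hx.ne'
  have h := ((hlog.const_mul (2 * √2 * c)).add ((hlog.pow 2).const_mul 2)).add_const (c ^ 2)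
  refine h.congr_deriv ?_
  simp only [valueDeriv2]
  field_simp
  ring

theorem sq_div_eight_mul_valueDeriv2_sq (c : ℝ) {x : ℝ} (hx : x ≠ 0) :
    x ^ 2 / 8 * valueDeriv2 c x ^ 2 = valueDeriv c x := by
  have h2 : √2 ^ 2 = 2 := sq_sqrt zero_le_two
  simp only [valueDeriv, valueDeriv2]
  field_simp
  linear_combination 4 * c ^ 2 * h2

theorem eqOn_deriv_of_hasDerivAt {f g g' : ℝ → ℝ} {s : Set ℝ} (hs : IsOpen s)
    (hfg : EqOn f g s) (hg : ∀ x ∈ s, HasDerivAt g (g' x) x) : EqOn (deriv f) g' s :=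
  fun x hx => (hfg.deriv hs hx).trans (hg x hx).deriv

end Homing

end

open Homing in
theorem stmt_12 (c c₀ : ℝ) (F : ℝ → ℝ)
    (hF : ∀ x : ℝ, 0 < x →
      F x = 2 * Real.sqrt 2 * c * x * (Real.log x - 1)
        + 2 * x * Real.log x * (Real.log x - 2) + 4 * x + c ^ 2 * x + c₀) :
    ∀ x : ℝ, 0 < x →
      deriv (deriv F) x = 2 * Real.sqrt 2 * c / x + 4 * Real.log x / x ∧
      (x ^ 2 / 8) * (deriv (deriv F) x) ^ 2 = deriv F x := by
  intro x hx
  have hF' : EqOn (deriv F) (valueDeriv c) (Ioi 0) :=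
    eqOn_deriv_of_hasDerivAt isOpen_Ioi hF fun y hy => hasDerivAt_value c c₀ hy
  have hF'' : EqOn (deriv (deriv F)) (valueDeriv2 c) (Ioi 0) :=
    eqOn_deriv_of_hasDerivAt isOpen_Ioi hF' fun y hy => hasDerivAt_valueDeriv c hy
  refine ⟨hF'' hx, ?_⟩
  rw [hF'' hx, hF' hx]
  exact sq_div_eight_mul_valueDeriv2_sq c hx.ne'
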